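/- arXiv:2203.03066 — 2 statements merged into one kernel-verified Lean document; each statement's English description precedes it below -/
import Mathlib

section
/- For 0 < α < 1, the small-argument asymptotics 𝓔_α(z) = -α/(Γ(1+α) z^{1-α}) + O(z^{2α-1}) holds as z → 0⁺; in particular z^{1-α} 𝓔_α(z) → -α/Γ(1+α) as z → 0⁺. -/
/-!
Put `x = z ^ α`. Then `z 𝓔_α(z) / α = ∑ c_k x^k` with `c_k = (-1)^k k / Γ(αk+1)`, and
these coefficients are absolutely summable since `Γ(y+1) ≥ 2^(y-2)` grows exponentially. The
`k = 0` term vanishes and the `k = 1` term is `-x / Γ(1+α)`, which produces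
`-α / (Γ(1+α) z^(1-α))`; for `x ≤ 1` the remaining tail is at most `(∑ |c_k|) x²`, and
`(α/z) x² = α z^(2α-1)`. Multiplying by `z^(1-α)` turns this error into `O(z^α)`, which
tends to `0`.
-/

open Filter Asymptotics

/-- `𝓔_α(z) = (α/z) ∑_{k≥1} (-1)^k k z^{αk} / Γ(αk+1)`, the derivative of
`z ↦ E_α(-z^α)` for `z > 0`. -/
noncomputable def calE (α z : ℝ) : ℝ :=
  (α / z) * ∑' k : ℕ, (-1 : ℝ) ^ k * k * z ^ (α * (k : ℝ)) / Real.Gamma (α * k + 1)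

open Real Topology

lemma two_rpow_sub_two_le_Gamma_add_one {y : ℝ} (hy : 1 ≤ y) :
    (2 : ℝ) ^ (y - 2) ≤ Gamma (y + 1) := by
  set n := ⌊y⌋₊
  have hn : 1 ≤ n := Nat.le_floor (by exact_mod_cast hy)
  have hny : (n : ℝ) ≤ y := Nat.floor_le (by linarith)
  have hyn : y < n + 1 := Nat.lt_floor_add_one y
  have hfact : 2 ^ (n - 1) ≤ n.factorial := by
    simpa [Nat.add_sub_cancel' hn] using Nat.factorial_mul_pow_le_factorial (m := 1) (n := n - 1)
  calc (2 : ℝ) ^ (y - 2) ≤ (2 : ℝ) ^ ((n - 1 : ℕ) : ℝ) :=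
        rpow_le_rpow_of_exponent_le one_le_two (by push_cast [hn]; linarith)
    _ ≤ n.factorial := by rw [rpow_natCast]; exact_mod_cast hfact
    _ = Gamma (n + 1) := (Gamma_nat_eq_factorial n).symm
    _ ≤ Gamma (y + 1) := Gamma_strictMonoOn_Ici.monotoneOn
        (by simp only [Set.mem_Ici]; exact_mod_cast Nat.succ_le_succ hn)
        (by simp only [Set.mem_Ici]; linarith) (by linarith)

lemma summable_natCast_div_Gamma_mul_add_one {α : ℝ} (hα : 0 < α) :
    Summable fun k : ℕ => (k : ℝ) / Gamma (α * k + 1) := by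
  set r : ℝ := 2 ^ (-α)
  have hr : ‖r‖ < 1 := by
    rw [norm_of_nonneg (by positivity)]
    exact rpow_lt_one_of_one_lt_of_neg one_lt_two (by linarith)
  refine ((summable_pow_mul_geometric_of_norm_lt_one 1 hr).mul_left 4)
    |>.of_norm_bounded_eventually_nat ?_
  filter_upwards [(tendsto_natCast_atTop_atTop.const_mul_atTop hα).eventually_ge_atTop 1] with k hk
  have hΓ := two_rpow_sub_two_le_Gamma_add_one hk
  have hgeom : (2 : ℝ) ^ (α * k - 2) * (4 * r ^ k) = 1 := by
    rw [rpow_sub two_pos, ← rpow_natCast, ← rpow_mul zero_le_two, neg_mul, rpow_neg zero_le_two]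
    have : (2 : ℝ) ^ (α * k) ≠ 0 := (rpow_pos_of_pos two_pos _).ne'
    field_simp
    norm_num
  rw [norm_of_nonneg (by positivity), div_le_iff₀ ((rpow_pos_of_pos two_pos _).trans_le hΓ)]
  calc (k : ℝ) = k * ((2 : ℝ) ^ (α * k - 2) * (4 * r ^ k)) := by rw [hgeom, mul_one]
    _ ≤ k * (Gamma (α * k + 1) * (4 * r ^ k)) := by gcongr
    _ = 4 * ((k : ℝ) ^ 1 * r ^ k) * Gamma (α * k + 1) := by ring

lemma norm_tsum_mul_pow_add_le {R : Type*} [NormedRing R] [NormOneClass R] {a : ℕ → R}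
    (ha : Summable fun k => ‖a k‖) {x : R} (hx : ‖x‖ ≤ 1) (n : ℕ) :
    ‖∑' k, a (k + n) * x ^ (k + n)‖ ≤ (∑' k, ‖a (k + n)‖) * ‖x‖ ^ n := by
  have ha' : Summable fun k => ‖a (k + n)‖ := (summable_nat_add_iff n).2 ha
  have hbound (k : ℕ) : ‖a (k + n) * x ^ (k + n)‖ ≤ ‖a (k + n)‖ * ‖x‖ ^ n :=
    calc ‖a (k + n) * x ^ (k + n)‖ ≤ ‖a (k + n)‖ * ‖x‖ ^ (k + n) :=
          (norm_mul_le _ _).trans (mul_le_mul_of_nonneg_left (norm_pow_le _ _) (norm_nonneg _))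
      _ ≤ ‖a (k + n)‖ * ‖x‖ ^ n := mul_le_mul_of_nonneg_left
          (pow_le_pow_of_le_one (norm_nonneg _) hx (Nat.le_add_left n k)) (norm_nonneg _)
  have hsum : Summable fun k => ‖a (k + n) * x ^ (k + n)‖ :=
    (ha'.mul_right _).of_nonneg_of_le (fun _ => norm_nonneg _) hbound
  calc ‖∑' k, a (k + n) * x ^ (k + n)‖ ≤ ∑' k, ‖a (k + n) * x ^ (k + n)‖ :=
        norm_tsum_le_tsum_norm hsum
    _ ≤ ∑' k, ‖a (k + n)‖ * ‖x‖ ^ n := hsum.tsum_le_tsum hbound (ha'.mul_right _)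
    _ = (∑' k, ‖a (k + n)‖) * ‖x‖ ^ n := tsum_mul_right

lemma tendsto_rpow_mul_of_isBigO_add_div_rpow {f : ℝ → ℝ} {c β γ : ℝ} (hγ : 0 < γ)
    (h : (fun z => f z + c / z ^ β) =O[𝓝[>] 0] fun z => z ^ (γ - β)) :
    Tendsto (fun z => z ^ β * f z) (𝓝[>] 0) (𝓝 (-c)) := by
  have hrem : (fun z => z ^ β * (f z + c / z ^ β)) =O[𝓝[>] 0] fun z => z ^ γ := by
    refine ((isBigO_refl (fun z : ℝ => z ^ β) _).mul h).trans (EventuallyEq.isBigO ?_)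
    filter_upwards [self_mem_nhdsWithin] with z hz
    rw [← rpow_add hz, add_sub_cancel]
  have hγ0 : Tendsto (fun z : ℝ => z ^ γ) (𝓝[>] 0) (𝓝 0) := by
    simpa [zero_rpow hγ.ne'] using
      (continuousAt_rpow_const 0 γ (Or.inr hγ.le)).tendsto.mono_left nhdsWithin_le_nhds
  rw [← tendsto_sub_nhds_zero_iff]
  refine (hrem.trans_tendsto hγ0).congr' ?_
  filter_upwards [self_mem_nhdsWithin] with z hz
  have : z ^ β ≠ 0 := (rpow_pos_of_pos hz β).ne'
  field_simp
  ring

noncomputable def calECoeff (α : ℝ) (k : ℕ) : ℝ := (-1) ^ k * k / Gamma (α * k + 1)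

lemma calECoeff_zero (α : ℝ) : calECoeff α 0 = 0 := by simp [calECoeff]

lemma calECoeff_one (α : ℝ) : calECoeff α 1 = -(Gamma (1 + α))⁻¹ := by
  simp [calECoeff, add_comm, div_eq_mul_inv]

lemma calE_eq_tsum (α : ℝ) {z : ℝ} (hz : 0 < z) :
    calE α z = α / z * ∑' k, calECoeff α k * (z ^ α) ^ k := by
  simp only [calE, calECoeff, ← rpow_natCast, ← rpow_mul hz.le]
  congr 1
  exact tsum_congr fun k => by ring

lemma summable_norm_calECoeff {α : ℝ} (hα : 0 < α) :
    Summable fun k => ‖calECoeff α k‖ := by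
  refine (summable_natCast_div_Gamma_mul_add_one hα).congr fun k => ?_
  rw [calECoeff, norm_div, norm_mul, norm_pow, norm_neg, norm_one, one_pow, one_mul,
    Real.norm_natCast, norm_of_nonneg (Gamma_pos_of_pos (by positivity)).le]

lemma calE_add_eq_tsum_tail {α z : ℝ} (hα : 0 < α) (hz : 0 < z) (hz1 : z ≤ 1) :
    calE α z + α / (Gamma (1 + α) * z ^ (1 - α)) =
      α / z * ∑' k, calECoeff α (k + 2) * (z ^ α) ^ (k + 2) := by
  set x := z ^ α
  have hx : ‖x‖ ≤ 1 := by
    rw [norm_of_nonneg (by positivity)]; exact rpow_le_one hz.le hz1 hα.le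
  have hsum : Summable fun k => calECoeff α k * x ^ k :=
    Summable.of_norm_bounded (summable_norm_calECoeff hα) fun k => by
      rw [norm_mul, norm_pow]
      exact mul_le_of_le_one_right (norm_nonneg _) (pow_le_one₀ (norm_nonneg _) hx)
  have hx0 : x ≠ 0 := (rpow_pos_of_pos hz α).ne'
  have hΓ : Gamma (1 + α) ≠ 0 := (Gamma_pos_of_pos (by linarith)).ne'
  rw [calE_eq_tsum α hz, ← hsum.sum_add_tsum_nat_add 2, rpow_sub hz, rpow_one,
    Finset.sum_range_succ, Finset.sum_range_one, calECoeff_zero, calECoeff_one]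
  field_simp
  ring

lemma abs_calE_add_le {α z : ℝ} (hα : 0 < α) (hz : 0 < z) (hz1 : z ≤ 1) :
    |calE α z + α / (Gamma (1 + α) * z ^ (1 - α))| ≤
      α * (∑' k, ‖calECoeff α (k + 2)‖) * z ^ (2 * α - 1) := by
  have hx : ‖z ^ α‖ ≤ 1 := by
    rw [norm_of_nonneg (by positivity)]; exact rpow_le_one hz.le hz1 hα.le
  have htail : |∑' k, calECoeff α (k + 2) * (z ^ α) ^ (k + 2)| ≤
      (∑' k, ‖calECoeff α (k + 2)‖) * (z ^ α) ^ 2 := by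
    simpa only [norm_eq_abs, abs_of_pos (rpow_pos_of_pos hz α)] using
      norm_tsum_mul_pow_add_le (summable_norm_calECoeff hα) hx 2
  rw [calE_add_eq_tsum_tail hα hz hz1, abs_mul, abs_of_pos (by positivity)]
  calc α / z * |∑' k, calECoeff α (k + 2) * (z ^ α) ^ (k + 2)|
      ≤ α / z * ((∑' k, ‖calECoeff α (k + 2)‖) * (z ^ α) ^ 2) := by gcongr
    _ = α * (∑' k, ‖calECoeff α (k + 2)‖) * z ^ (2 * α - 1) := by
        rw [rpow_sub hz, rpow_one, mul_comm 2 α, rpow_mul hz.le, rpow_two]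
        field_simp

lemma calE_add_isBigO {α : ℝ} (hα : 0 < α) :
    (fun z => calE α z + α / (Gamma (1 + α) * z ^ (1 - α))) =O[𝓝[>] 0]
      fun z => z ^ (2 * α - 1) := by
  refine isBigO_iff.2 ⟨α * ∑' k, ‖calECoeff α (k + 2)‖, ?_⟩
  filter_upwards [Ioc_mem_nhdsGT zero_lt_one] with z ⟨hz, hz1⟩
  rw [norm_eq_abs, norm_of_nonneg (by positivity)]
  exact abs_calE_add_le hα hz hz1

theorem calE_small_asymptotics_general (α : ℝ) (hα : 0 < α) :
    (fun z : ℝ => calE α z + α / (Real.Gamma (1 + α) * z ^ (1 - α)))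
        =O[nhdsWithin 0 (Set.Ioi 0)] (fun z : ℝ => z ^ (2 * α - 1)) ∧
    Tendsto (fun z : ℝ => z ^ (1 - α) * calE α z) (nhdsWithin 0 (Set.Ioi 0))
      (nhds (-(α / Real.Gamma (1 + α)))) := by
  refine ⟨calE_add_isBigO hα, tendsto_rpow_mul_of_isBigO_add_div_rpow hα ?_⟩
  convert calE_add_isBigO hα using 3 with z
  · rw [div_div]
  · ring_nf

/-- Small-argument asymptotics for `0 < α < 1`:
`𝓔_α(z) = -α/(Γ(1+α) z^{1-α}) + O(z^{2α-1})` as `z → 0⁺`; in particular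
`z^{1-α} 𝓔_α(z) → -α/Γ(1+α)` as `z → 0⁺`. -/
theorem calE_small_asymptotics (α : ℝ) (hα : 0 < α) (hα1 : α < 1) :
    (fun z : ℝ => calE α z + α / (Real.Gamma (1 + α) * z ^ (1 - α)))
        =O[nhdsWithin 0 (Set.Ioi 0)] (fun z : ℝ => z ^ (2 * α - 1)) ∧
    Tendsto (fun z : ℝ => z ^ (1 - α) * calE α z) (nhdsWithin 0 (Set.Ioi 0))
      (nhds (-(α / Real.Gamma (1 + α)))) :=
  calE_small_asymptotics_general α hα
end

section
/- For α > 0 and Re s > 1, the Laplace transform of t ↦ t^{α-1} E_{α,α}(t^α) equals 1/(s^α - 1). -/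
/-!
Expanding `E_{α,α}` gives `t^{α-1} E_{α,α}(t^α) = ∑_{k≥0} t^{α(k+1)-1} / Γ(α(k+1))`. Each term is
a Gamma kernel, whose Laplace transform is `s^{-α(k+1)}`; all terms are nonnegative and these
transforms are summable, so the integral and the sum may be exchanged, leaving the geometric
series `∑_{k≥0} (s^{-α})^{k+1} = 1/(s^α - 1)`.
-/

/-- Two-parameter Mittag-Leffler function `E_{α,β}(x) = ∑_{k≥0} x^k / Γ(αk+β)`. -/
noncomputable def mlE2 (α β x : ℝ) : ℝ :=
  ∑' k : ℕ, x ^ k / Real.Gamma (α * k + β)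

open MeasureTheory Real Set

lemma integrableOn_rpow_sub_one_mul_exp_neg_mul {a s : ℝ} (ha : 0 < a) (hs : 0 < s) :
    IntegrableOn (fun t : ℝ => t ^ (a - 1) * exp (-(s * t))) (Ioi 0) := by
  refine (integrableOn_rpow_mul_exp_neg_mul_rpow (s := a - 1) (by linarith) one_pos hs).congr_fun
    (fun t _ => ?_) measurableSet_Ioi
  simp only [rpow_one, neg_mul]

lemma integral_rpow_sub_one_mul_exp_neg_mul_div_Gamma {a s : ℝ} (ha : 0 < a) (hs : 0 < s) :
    ∫ t in Ioi 0, t ^ (a - 1) * exp (-(s * t)) / Gamma a = (s ^ a)⁻¹ := by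
  rw [integral_div, integral_rpow_mul_exp_neg_mul_Ioi ha hs, mul_div_cancel_right₀ _
    (Gamma_pos_of_pos ha).ne', one_div, inv_rpow hs.le]

theorem integral_tsum_rpow_sub_one_mul_exp_neg_mul_div_Gamma {a : ℕ → ℝ} {s : ℝ}
    (ha : ∀ k, 0 < a k) (hs : 0 < s) (hsum : Summable fun k => (s ^ a k)⁻¹) :
    ∫ t in Ioi 0, ∑' k, t ^ (a k - 1) * exp (-(s * t)) / Gamma (a k) = ∑' k, (s ^ a k)⁻¹ := by
  have hnonneg : ∀ k, ∀ t ∈ Ioi (0 : ℝ), 0 ≤ t ^ (a k - 1) * exp (-(s * t)) / Gamma (a k) :=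
    fun k t ht => by
      have := rpow_nonneg (le_of_lt ht) (a k - 1)
      have := Gamma_pos_of_pos (ha k)
      positivity
  have hnorm : ∀ k, ∫ t in Ioi 0, ‖t ^ (a k - 1) * exp (-(s * t)) / Gamma (a k)‖ = (s ^ a k)⁻¹ :=
    fun k => by
      rw [← integral_rpow_sub_one_mul_exp_neg_mul_div_Gamma (ha k) hs]
      exact setIntegral_congr_fun measurableSet_Ioi fun t ht => norm_of_nonneg (hnonneg k t ht)
  rw [← integral_tsum_of_summable_integral_norm
    (fun k => (integrableOn_rpow_sub_one_mul_exp_neg_mul (ha k) hs).div_const _)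
    (by simpa only [hnorm] using hsum)]
  exact tsum_congr fun k => integral_rpow_sub_one_mul_exp_neg_mul_div_Gamma (ha k) hs

lemma rpow_sub_one_mul_mlE2_rpow {α t : ℝ} (ht : 0 < t) :
    t ^ (α - 1) * mlE2 α α (t ^ α) = ∑' k : ℕ, t ^ (α * (k + 1) - 1) / Gamma (α * (k + 1)) := by
  rw [mlE2, ← tsum_mul_left]
  refine tsum_congr fun k => ?_
  rw [← rpow_natCast, ← rpow_mul ht.le, mul_div_assoc', ← rpow_add ht]
  ring_nf

lemma hasSum_inv_pow_succ {x : ℝ} (hx : 1 < x) :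
    HasSum (fun k : ℕ => x⁻¹ ^ (k + 1)) (1 / (x - 1)) := by
  have hx0 : x ≠ 0 := by positivity
  have hx1 : x - 1 ≠ 0 := by linarith
  have hsum : 1 / (x - 1) = x⁻¹ * (1 - x⁻¹)⁻¹ := by field_simp
  rw [hsum]
  simpa only [← pow_succ'] using
    (hasSum_geometric_of_lt_one (by positivity) (inv_lt_one_of_one_lt₀ hx)).mul_left x⁻¹

/-- For `α > 0` and `s > 1`, the Laplace transform of `t ↦ t^{α-1} E_{α,α}(t^α)`
equals `1/(s^α - 1)`. -/
theorem laplace_mittagLeffler (α s : ℝ) (hα : 0 < α) (hs : 1 < s) :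
    ∫ t in Set.Ioi (0 : ℝ), t ^ (α - 1) * mlE2 α α (t ^ α) * Real.exp (-(s * t))
      = 1 / (s ^ α - 1) := by
  have hs0 : 0 < s := one_pos.trans hs
  have hsα : 1 < s ^ α := one_lt_rpow hs hα
  have hpow : ∀ k : ℕ, (s ^ (α * (k + 1)))⁻¹ = (s ^ α)⁻¹ ^ (k + 1) := fun k => by
    rw [rpow_mul hs0.le, ← Nat.cast_add_one, rpow_natCast, inv_pow]
  have hseries : ∀ t ∈ Ioi (0 : ℝ), t ^ (α - 1) * mlE2 α α (t ^ α) * exp (-(s * t)) =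
      ∑' k : ℕ, t ^ (α * (k + 1) - 1) * exp (-(s * t)) / Gamma (α * (k + 1)) := fun t ht => by
    rw [rpow_sub_one_mul_mlE2_rpow ht, ← tsum_mul_right]
    exact tsum_congr fun k => div_mul_eq_mul_div _ _ _
  rw [setIntegral_congr_fun measurableSet_Ioi hseries,
    integral_tsum_rpow_sub_one_mul_exp_neg_mul_div_Gamma (fun k => by positivity) hs0
      (by simpa only [hpow] using (hasSum_inv_pow_succ hsα).summable)]
  simpa only [hpow] using (hasSum_inv_pow_succ hsα).tsum_eq
end
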